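/- Let 0<α<1, μ>0 and t>0. Then the fundamental solution G_α^μ is continuous across x=0 with lim_{x→0⁻} G_α^μ(x,t) = lim_{x→0⁺} G_α^μ(x,t) = t^{μ−1}/(3Γ(μ)), and the second fundamental solution satisfies lim_{x→0⁺} V_α^μ(x,t) = (√3/6) t^{μ−1}/Γ(μ). -/

import Mathlib

open MeasureTheory Real Filter Set Topology

/-- Caputo fractional derivative of order `α` with base point `0`. -/
noncomputable def caputoD (α : ℝ) (g : ℝ → ℝ) (t : ℝ) : ℝ :=
  (1 / Real.Gamma (1 - α)) * ∫ ξ in (0:ℝ)..t, deriv g ξ / (t - ξ) ^ α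

/-- Riemann–Liouville fractional integral of order `β` with base point `0`. -/
noncomputable def fracJ (β : ℝ) (g : ℝ → ℝ) (t : ℝ) : ℝ :=
  (1 / Real.Gamma β) * ∫ ξ in (0:ℝ)..t, g ξ * (t - ξ) ^ (β - 1)

/-- The Wright function `φ(λ, μ; z)`. -/
noncomputable def wrightPhi (l μ z : ℂ) : ℂ :=
  ∑' n : ℕ, z ^ n / ((n.factorial : ℂ) * Complex.Gamma (l * n + μ))

/-- The cube root of unity `e^{2πi/3}`. -/
noncomputable def e23 : ℂ := Complex.exp (2 * Real.pi * Complex.I / 3)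

/-- First fundamental solution `G_α^μ(x,t)` of the time-fractional Airy equation. -/
noncomputable def Gfun (α μ : ℝ) (x t : ℝ) : ℝ :=
  if x < 0 then
    (1/3) * t ^ (μ - 1) * (wrightPhi (-(α/3)) μ ((x / t ^ (α/3) : ℝ) : ℂ)).re
  else
    -(2/3) * t ^ (μ - 1) * (e23 * wrightPhi (-(α/3)) μ (e23 * ((x / t ^ (α/3) : ℝ) : ℂ))).re

/-- Second fundamental solution `V_α^μ(x,t)` of the time-fractional Airy equation. -/
noncomputable def Vfun (α μ : ℝ) (x t : ℝ) : ℝ :=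
  (1/3) * t ^ (μ - 1) * (e23 * wrightPhi (-(α/3)) μ (e23 * ((x / t ^ (α/3) : ℝ) : ℂ))).im

/-- `G_α^μ` extended across `x = 0` by its common one-sided limit. -/
noncomputable def Ghat (α μ : ℝ) (x t : ℝ) : ℝ :=
  if x = 0 then t ^ (μ - 1) / (3 * Real.Gamma μ) else Gfun α μ x t

/-!
For `0 < a < 1` the Wright series `φ(-a, μ; z)` converges absolutely and uniformly on the closed
unit disc. Indeed, by the reflection formula `1 / |Γ(μ - a n)| ≤ Γ(a n + 1 - μ) / π` as soon as
`μ - a n < 1`, and `Γ(a n + c) / n!` is summable by the ratio test, since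
`Γ(a (n + 1) + c) ≤ Γ(a n + c + 1) = (a n + c) Γ(a n + c)` for large `n` and `a < 1`.
So `φ` is continuous at `0`, where it equals `1 / Γ(μ)`, and the three limits follow from
`e^{2πi/3} = -1/2 + i √3 / 2`.
-/

open scoped Nat

theorem abs_inv_Gamma_le_Gamma_one_sub_div_pi {x : ℝ} (hx : x < 1) :
    |Gamma x|⁻¹ ≤ Gamma (1 - x) / π := by
  have hG1 : 0 < Gamma (1 - x) := Gamma_pos_of_pos (by linarith)
  rcases eq_or_ne (Gamma x) 0 with hG | hG
  · rw [hG, abs_zero, inv_zero]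
    positivity
  -- `π / 0 = 0` in Lean, so the reflection formula itself forces `sin (π x) ≠ 0`.
  have hsin : sin (π * x) ≠ 0 := by
    intro hs
    have h := Gamma_mul_Gamma_one_sub x
    rw [hs, div_zero] at h
    exact hG ((mul_eq_zero.mp h).resolve_right hG1.ne')
  have hrefl : |Gamma x| * Gamma (1 - x) = π / |sin (π * x)| := by
    rw [← abs_of_pos hG1, ← abs_mul, Gamma_mul_Gamma_one_sub, abs_div, abs_of_pos pi_pos]
  have hsin1 : |sin (π * x)| ≤ 1 := abs_sin_le_one _
  rw [inv_le_iff_one_le_mul₀ (abs_pos.mpr hG), div_mul_eq_mul_div, le_div_iff₀ pi_pos, one_mul,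
    mul_comm, hrefl, le_div_iff₀ (abs_pos.mpr hsin)]
  nlinarith [pi_pos]

theorem summable_Gamma_mul_add_div_factorial {a : ℝ} (ha0 : 0 < a) (ha1 : a < 1) (c : ℝ) :
    Summable fun n : ℕ => Gamma (a * n + c) / n ! := by
  refine summable_of_ratio_norm_eventually_le (r := (1 + a) / 2) (by linarith) ?_
  have hlin : ∀ b : ℝ, 0 < b → ∀ d : ℝ, ∀ᶠ n : ℕ in atTop, 0 ≤ b * n + d := fun b hb d =>
    (tendsto_atTop_add_const_right _ d
      (tendsto_natCast_atTop_atTop.const_mul_atTop hb)).eventually_ge_atTop 0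
  filter_upwards [hlin a ha0 (c - 2), hlin ((1 + a) / 2 - a) (by linarith) ((1 + a) / 2 - c)]
    with n hn2 hnr
  have hpos : 0 < a * n + c := by linarith
  have hΓ : 0 < Gamma (a * n + c) := Gamma_pos_of_pos hpos
  have hΓ' : 0 < Gamma (a * ↑(n + 1) + c) := Gamma_pos_of_pos (by push_cast; linarith)
  have hstep : Gamma (a * ↑(n + 1) + c) ≤ (a * n + c) * Gamma (a * n + c) := by
    rw [← Gamma_add_one hpos.ne']
    exact Gamma_strictMonoOn_Ici.monotoneOn (by rw [mem_Ici]; push_cast; linarith)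
      (by rw [mem_Ici]; linarith) (by push_cast; linarith)
  rw [norm_of_nonneg (by positivity), norm_of_nonneg (by positivity), Nat.factorial_succ,
    Nat.cast_mul, div_le_iff₀ (by positivity)]
  calc Gamma (a * ↑(n + 1) + c) ≤ (a * n + c) * Gamma (a * n + c) := hstep
    _ ≤ (1 + a) / 2 * (n + 1) * Gamma (a * n + c) := by gcongr; linarith
    _ = (1 + a) / 2 * (Gamma (a * n + c) / n !) * (↑(n + 1) * n !) := by field_simp; push_cast; ring

theorem summable_inv_factorial_mul_abs_Gamma_sub {a : ℝ} (ha0 : 0 < a) (ha1 : a < 1) (μ : ℝ) :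
    Summable fun n : ℕ => ((n ! : ℝ) * |Gamma (μ - a * n)|)⁻¹ := by
  refine ((summable_Gamma_mul_add_div_factorial ha0 ha1 (1 - μ)).div_const π)
    |>.of_norm_bounded_eventually_nat ?_
  filter_upwards [(tendsto_natCast_atTop_atTop.const_mul_atTop ha0).eventually_gt_atTop (μ - 1)]
    with n hn
  have hrefl := abs_inv_Gamma_le_Gamma_one_sub_div_pi (x := μ - a * n) (by linarith)
  rw [show 1 - (μ - a * n) = a * n + (1 - μ) by ring] at hrefl
  rw [norm_of_nonneg (by positivity), mul_inv, div_right_comm, div_eq_inv_mul]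
  gcongr

theorem wrightPhi_zero (l μ : ℂ) : wrightPhi l μ 0 = (Complex.Gamma μ)⁻¹ := by
  rw [wrightPhi, tsum_eq_single 0 fun n hn => by simp [zero_pow hn]]
  simp

theorem continuousAt_wrightPhi_zero {a : ℝ} (ha0 : 0 < a) (ha1 : a < 1) (μ : ℝ) :
    ContinuousAt (wrightPhi (-a) μ) 0 := by
  refine (continuousOn_tsum (fun n => (continuous_pow n |>.div_const _).continuousOn)
    (summable_inv_factorial_mul_abs_Gamma_sub ha0 ha1 μ) fun n z hz => ?_).continuousAt
    (Metric.closedBall_mem_nhds 0 one_pos)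
  have harg : -(a : ℂ) * n + μ = ((μ - a * n : ℝ) : ℂ) := by push_cast; ring
  rw [harg, Complex.Gamma_ofReal, norm_div, norm_mul, norm_pow, Complex.norm_natCast,
    Complex.norm_real, norm_eq_abs, div_eq_mul_inv]
  exact mul_le_of_le_one_left (by positivity)
    (pow_le_one₀ (norm_nonneg z) (mem_closedBall_zero_iff.mp hz))

theorem tendsto_wrightPhi_nhds_zero {a : ℝ} (ha0 : 0 < a) (ha1 : a < 1) (μ : ℝ) :
    Tendsto (wrightPhi (-a) μ) (𝓝 0) (𝓝 ((Gamma μ)⁻¹ : ℝ)) := by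
  simpa [wrightPhi_zero, Complex.Gamma_ofReal] using
    (continuousAt_wrightPhi_zero ha0 ha1 μ).tendsto

theorem e23_eq : e23 = Complex.exp ((2 * π / 3 : ℝ) * Complex.I) := by
  rw [e23]
  push_cast
  ring_nf

theorem e23_re : e23.re = -(1 / 2) := by
  rw [e23_eq, Complex.exp_ofReal_mul_I_re, show 2 * π / 3 = π - π / 3 by ring, cos_pi_sub,
    cos_pi_div_three]

theorem e23_im : e23.im = √3 / 2 := by
  rw [e23_eq, Complex.exp_ofReal_mul_I_im, show 2 * π / 3 = π - π / 3 by ring, sin_pi_sub,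
    sin_pi_div_three]

theorem Gfun_Vfun_vertex_limits_general (α μ t : ℝ) (hα0 : 0 < α) (hα1 : α < 1) :
    Filter.Tendsto (fun x => Gfun α μ x t) (nhdsWithin 0 (Set.Iio 0))
      (nhds (t ^ (μ - 1) / (3 * Real.Gamma μ))) ∧
    Filter.Tendsto (fun x => Gfun α μ x t) (nhdsWithin 0 (Set.Ioi 0))
      (nhds (t ^ (μ - 1) / (3 * Real.Gamma μ))) ∧
    Filter.Tendsto (fun x => Vfun α μ x t) (nhdsWithin 0 (Set.Ioi 0))
      (nhds ((Real.sqrt 3 / 6) * t ^ (μ - 1) / Real.Gamma μ)) := by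
  have hφ : Tendsto (wrightPhi (-(α / 3)) μ) (𝓝 0) (𝓝 ((Gamma μ)⁻¹ : ℝ)) := by
    simpa using tendsto_wrightPhi_nhds_zero (a := α / 3) (by linarith) (by linarith) μ
  have hneg : Tendsto (fun x : ℝ => wrightPhi (-(α / 3)) μ ((x / t ^ (α / 3) : ℝ) : ℂ))
      (𝓝[<] 0) (𝓝 ((Gamma μ)⁻¹ : ℝ)) :=
    hφ.comp ((by fun_prop : Continuous fun x : ℝ => ((x / t ^ (α / 3) : ℝ) : ℂ)).tendsto' 0 0
      (by simp) |>.mono_left nhdsWithin_le_nhds)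
  have hpos : Tendsto
      (fun x : ℝ => e23 * wrightPhi (-(α / 3)) μ (e23 * ((x / t ^ (α / 3) : ℝ) : ℂ)))
      (𝓝[>] 0) (𝓝 (e23 * ((Gamma μ)⁻¹ : ℝ))) :=
    (hφ.comp ((by fun_prop : Continuous fun x : ℝ => e23 * ((x / t ^ (α / 3) : ℝ) : ℂ)).tendsto'
      0 0 (by simp) |>.mono_left nhdsWithin_le_nhds)).const_mul e23
  refine ⟨?_, ?_, ?_⟩
  · have h := (Complex.continuous_re.tendsto _).comp hneg |>.const_mul (1 / 3 * t ^ (μ - 1))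
    rw [show 1 / 3 * t ^ (μ - 1) * (((Gamma μ)⁻¹ : ℝ) : ℂ).re = t ^ (μ - 1) / (3 * Gamma μ) by
      rw [Complex.ofReal_re]; ring] at h
    exact h.congr' (eventually_nhdsWithin_of_forall fun x (hx : x < 0) => (if_pos hx).symm)
  · have h := (Complex.continuous_re.tendsto _).comp hpos |>.const_mul (-(2 / 3) * t ^ (μ - 1))
    rw [show -(2 / 3) * t ^ (μ - 1) * (e23 * ((Gamma μ)⁻¹ : ℝ)).re = t ^ (μ - 1) / (3 * Gamma μ) by
      simp only [Complex.mul_re, e23_re, e23_im, Complex.ofReal_re, Complex.ofReal_im]; ring] at h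
    exact h.congr' (eventually_nhdsWithin_of_forall fun x (hx : 0 < x) => (if_neg hx.not_gt).symm)
  · have h := (Complex.continuous_im.tendsto _).comp hpos |>.const_mul (1 / 3 * t ^ (μ - 1))
    rw [show 1 / 3 * t ^ (μ - 1) * (e23 * ((Gamma μ)⁻¹ : ℝ)).im = √3 / 6 * t ^ (μ - 1) / Gamma μ by
      simp only [Complex.mul_im, e23_re, e23_im, Complex.ofReal_re, Complex.ofReal_im]; ring] at h
    exact h

/-- Boundary values at the vertex: for `μ > 0` the fundamental solution `G_α^μ` is
continuous across `x = 0` with common one-sided limit `t^{μ−1}/(3Γ(μ))`, and the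
second fundamental solution satisfies `V_α^μ(0+, t) = (√3/6) t^{μ−1}/Γ(μ)`. -/
theorem Gfun_Vfun_vertex_limits (α μ t : ℝ) (hα0 : 0 < α) (hα1 : α < 1)
    (hμ : 0 < μ) (ht : 0 < t) :
    Filter.Tendsto (fun x => Gfun α μ x t) (nhdsWithin 0 (Set.Iio 0))
      (nhds (t ^ (μ - 1) / (3 * Real.Gamma μ))) ∧
    Filter.Tendsto (fun x => Gfun α μ x t) (nhdsWithin 0 (Set.Ioi 0))
      (nhds (t ^ (μ - 1) / (3 * Real.Gamma μ))) ∧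
    Filter.Tendsto (fun x => Vfun α μ x t) (nhdsWithin 0 (Set.Ioi 0))
      (nhds ((Real.sqrt 3 / 6) * t ^ (μ - 1) / Real.Gamma μ)) :=
  Gfun_Vfun_vertex_limits_general α μ t hα0 hα1
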